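/- arXiv:1203.4092 — 3 statements merged into one kernel-verified Lean document; each statement's English description precedes it below -/
import Mathlib

section
/- Let m ≥ 2 be a natural number and ε, λ, μ real numbers with μ ≠ 0 satisfying μ² − λμ = ε and λ² + (m−1)μ² − ε(m+3) = 0. Then ε > 0. -/
theorem stmt_0 (m : ℕ) (hm : 2 ≤ m) (ε lam μ : ℝ) (hμ : μ ≠ 0)
    (h1 : μ ^ 2 - lam * μ = ε)
    (h2 : lam ^ 2 + ((m : ℝ) - 1) * μ ^ 2 - ε * ((m : ℝ) + 3) = 0) :
    0 < ε := by
  by_contra h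
  push_neg at h
  have hm' : (2 : ℝ) ≤ (m : ℝ) := by exact_mod_cast hm
  have hμ2 : 0 < μ ^ 2 := by positivity
  nlinarith [sq_nonneg lam, sq_nonneg (lam * μ), mul_nonneg (sub_nonneg.2 hm') hμ2.le]
end

section
/- Let μ ≠ 0 be real, λ = (μ²−1)/μ, and define f : ℝ² → ℂ³ by f(x,y) = (−i√(μ²+1)·(i μ/(μ²+1)) e^{i(λ−μ)x}, (1/√(μ²+1)) cos(√(μ²+1) y) e^{iμx}, (1/√(μ²+1)) sin(√(μ²+1) y) e^{iμx}). Then f satisfies the PDE system f_xx = iλ f_x − f, f_xy = iμ f_y, f_yy = iμ f_x − f. -/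
open Complex

/-!
Writing `f(x, y) = (g x, p y * e x, q y * e x)`, every component is a solution of a first-order
linear ODE in its variable: `g' = i(λ - μ) g`, `e' = iμ e`, and `(p, q)` rotates with speed
`s = √(μ² + 1)`. The three equations then reduce to the two algebraic identities `λμ = μ² - 1`
(making `μ` and `λ - μ` the two roots of `t² - λt - 1`) and `s² = μ² + 1`.
-/

theorem hasDerivAt_cexp_mul_ofReal (b : ℂ) (x : ℝ) :
    HasDerivAt (fun t : ℝ => cexp (b * t)) (b * cexp (b * x)) x := by
  simpa only [mul_comm] using (hasDerivAt_const_mul (x := (x : ℂ)) b).cexp.comp_ofReal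

theorem hasDerivAt_const_mul_cexp_mul_ofReal (A b : ℂ) (x : ℝ) :
    HasDerivAt (fun t : ℝ => A * cexp (b * t)) (b * (A * cexp (b * x))) x :=
  ((hasDerivAt_cexp_mul_ofReal b x).const_mul A).congr_deriv (by ring)

theorem hasDerivAt_const_mul_cos_mul (c : ℂ) (s y : ℝ) :
    HasDerivAt (fun t : ℝ => c * (Real.cos (s * t) : ℂ)) (-(s * (c * Real.sin (s * y)))) y := by
  have h := ((hasDerivAt_const_mul (x := y) s).cos.ofReal_comp).const_mul c
  exact h.congr_deriv (by push_cast; ring)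

theorem hasDerivAt_const_mul_sin_mul (c : ℂ) (s y : ℝ) :
    HasDerivAt (fun t : ℝ => c * (Real.sin (s * t) : ℂ)) (s * (c * Real.cos (s * y))) y := by
  have h := ((hasDerivAt_const_mul (x := y) s).sin.ofReal_comp).const_mul c
  exact h.congr_deriv (by push_cast; ring)

-- The factors `p y * e x` are in this order so that the lift is definitionally a `separatedMap`.
def separatedMap (g e p q : ℝ → ℂ) (x y : ℝ) : ℂ × ℂ × ℂ :=
  (g x, p y * e x, q y * e x)

section separatedMap

variable {g e p q g' e' p' q' : ℝ → ℂ}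

theorem deriv_separatedMap_left (hg : ∀ t, HasDerivAt g (g' t) t) (he : ∀ t, HasDerivAt e (e' t) t)
    (x y : ℝ) : deriv (fun x => separatedMap g e p q x y) x = separatedMap g' e' p q x y :=
  ((hg x).prodMk (((he x).const_mul (p y)).prodMk ((he x).const_mul (q y)))).deriv

theorem deriv_separatedMap_right (hp : ∀ t, HasDerivAt p (p' t) t) (hq : ∀ t, HasDerivAt q (q' t) t)
    (x y : ℝ) :
    deriv (fun y => separatedMap g e p q x y) y = separatedMap (fun _ => 0) e p' q' x y :=
  ((hasDerivAt_const y (g x)).prodMk (((hp y).mul_const (e x)).prodMk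
    ((hq y).mul_const (e x)))).deriv

theorem separatedMap_structure_equations {a l s : ℂ} (hs : s ^ 2 = a ^ 2 + 1)
    (hl : l * a = a ^ 2 - 1)
    (hg : ∀ t, HasDerivAt g (I * (l - a) * g t) t) (he : ∀ t, HasDerivAt e (I * a * e t) t)
    (hp : ∀ t, HasDerivAt p (-(s * q t)) t) (hq : ∀ t, HasDerivAt q (s * p t) t) (x y : ℝ) :
    let f := separatedMap g e p q
    deriv (fun x' => deriv (fun x'' => f x'' y) x') x =
        (I * l) • deriv (fun x'' => f x'' y) x - f x y ∧
      deriv (fun x' => deriv (fun y' => f x' y') y) x =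
        (I * a) • deriv (fun y' => f x y') y ∧
      deriv (fun y' => deriv (fun y'' => f x y'') y') y =
        (I * a) • deriv (fun x'' => f x'' y) x - f x y := by
  intro f
  have hg' t := (hg t).const_mul (I * (l - a))
  have he' t := (he t).const_mul (I * a)
  have hp' : ∀ t, HasDerivAt (fun t => -(s * q t)) (-(s * (s * p t))) t :=
    fun t => ((hq t).const_mul s).neg
  have hq' t := (hp t).const_mul s
  simp only [f, deriv_separatedMap_left hg he, deriv_separatedMap_left hg' he',
    deriv_separatedMap_right hp hq, deriv_separatedMap_right hp' hq',
    deriv_separatedMap_left (fun t => hasDerivAt_const t 0) he]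
  simp only [separatedMap, Prod.smul_mk, Prod.mk_sub_mk, Prod.mk.injEq, smul_eq_mul]
  refine ⟨⟨?_, ?_, ?_⟩, ⟨by ring, by ring, by ring⟩, ⟨?_, ?_, ?_⟩⟩
  · linear_combination (-a * (l - a) * g x) * I_sq + g x * hl
  · linear_combination ((a ^ 2 - l * a) * p y * e x) * I_sq + p y * e x * hl
  · linear_combination ((a ^ 2 - l * a) * q y * e x) * I_sq + q y * e x * hl
  · linear_combination (-a * (l - a) * g x) * I_sq + g x * hl
  · linear_combination (-a ^ 2 * p y * e x) * I_sq - p y * e x * hs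
  · linear_combination (-a ^ 2 * q y * e x) * I_sq - q y * e x * hs

end separatedMap

theorem stmt_3 (μ : ℝ) (hμ : μ ≠ 0) (lam : ℝ) (hlam : lam = (μ ^ 2 - 1) / μ)
    (f : ℝ → ℝ → ℂ × ℂ × ℂ)
    (hf : ∀ x y, f x y =
      ((-Complex.I * (Real.sqrt (μ ^ 2 + 1) : ℝ)) * (Complex.I * μ / ((μ : ℂ) ^ 2 + 1)) *
          Complex.exp (Complex.I * (lam - μ) * x),
       (1 / (Real.sqrt (μ ^ 2 + 1) : ℝ)) * (Real.cos (Real.sqrt (μ ^ 2 + 1) * y) : ℝ) *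
          Complex.exp (Complex.I * μ * x),
       (1 / (Real.sqrt (μ ^ 2 + 1) : ℝ)) * (Real.sin (Real.sqrt (μ ^ 2 + 1) * y) : ℝ) *
          Complex.exp (Complex.I * μ * x))) :
    ∀ x y : ℝ,
      deriv (fun x' => deriv (fun x'' => f x'' y) x') x =
        (Complex.I * (lam : ℂ)) • deriv (fun x'' => f x'' y) x - f x y ∧
      deriv (fun x' => deriv (fun y' => f x' y') y) x =
        (Complex.I * (μ : ℂ)) • deriv (fun y' => f x y') y ∧
      deriv (fun y' => deriv (fun y'' => f x y'') y') y =
        (Complex.I * (μ : ℂ)) • deriv (fun x'' => f x'' y) x - f x y := by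
  have hs : ((√(μ ^ 2 + 1) : ℝ) : ℂ) ^ 2 = (μ : ℂ) ^ 2 + 1 := by
    exact_mod_cast Real.sq_sqrt (by positivity)
  have hl : (lam : ℂ) * μ = (μ : ℂ) ^ 2 - 1 := by
    exact_mod_cast (show lam * μ = μ ^ 2 - 1 by rw [hlam]; field_simp)
  obtain rfl : f = separatedMap (fun x => _ * cexp (I * (lam - μ) * x)) (fun x => cexp (I * μ * x))
      (fun y => _ * (Real.cos (√(μ ^ 2 + 1) * y) : ℂ))
      (fun y => _ * (Real.sin (√(μ ^ 2 + 1) * y) : ℂ)) := funext₂ hf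
  exact separatedMap_structure_equations hs hl
    (hasDerivAt_const_mul_cexp_mul_ofReal _ _) (hasDerivAt_cexp_mul_ofReal _)
    (hasDerivAt_const_mul_cos_mul _ _) (hasDerivAt_const_mul_sin_mul _ _)
end

section
/- Let μ ∈ ℝ with μ ≠ 0 and let λ = (μ²−1)/μ. The general solution of the system f_xx = iλ f_x − f, f_xy = iμ f_y, f_yy = iμ f_x − f for a smooth function f : ℝ² → ℂ has the form f(x,y) = (c₂ sin(√(μ²+1) y) + c₃ cos(√(μ²+1) y)) e^{iμx} + c₁ · i μ/(μ²+1) · e^{i(λ−μ)x} for constants c₁, c₂, c₃ ∈ ℂ; that is, any f of this form satisfies the system. -/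
/-!
Every function of the stated form is `A(y) e^{iμx} + B e^{iνx}` with `ν = λ - μ = -1/μ` and
`A'' = -(μ² + 1) A`. Both `iμ` and `iν` are roots of `z² - iλz + 1`, since their product is
`-μν = 1` and their sum is `iλ`; this gives `f_xx = iλ f_x - f`. The mixed equation only sees the
`e^{iμx}` mode, and in `f_yy = iμ f_x - f` the `e^{iνx}` mode cancels again because `μν = -1`.
-/

open Complex

/-- The three structure equations `f_xx = iλ f_x - f`, `f_xy = iμ f_y`, `f_yy = iμ f_x - f`. -/
def SatisfiesStructureEquations (μ lam : ℝ) (f : ℝ → ℝ → ℂ) : Prop :=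
  ∀ x y : ℝ,
    deriv (fun x' => deriv (fun x'' => f x'' y) x') x =
      I * (lam : ℂ) * deriv (fun x'' => f x'' y) x - f x y ∧
    deriv (fun x' => deriv (fun y' => f x' y') y) x =
      I * (μ : ℂ) * deriv (fun y' => f x y') y ∧
    deriv (fun y' => deriv (fun y'' => f x y'') y') y =
      I * (μ : ℂ) * deriv (fun x'' => f x'' y) x - f x y

noncomputable def sinCosComb (c₂ c₃ ω : ℂ) (y : ℝ) : ℂ :=
  c₂ * Complex.sin (ω * y) + c₃ * Complex.cos (ω * y)

theorem hasDerivAt_sinCosComb (c₂ c₃ ω : ℂ) (y : ℝ) :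
    HasDerivAt (sinCosComb c₂ c₃ ω) (sinCosComb (-ω * c₃) (ω * c₂) ω y) y := by
  have hlin := (hasDerivAt_id (y : ℂ)).const_mul ω
  have h := ((hlin.csin.const_mul c₂).fun_add (hlin.ccos.const_mul c₃)).comp_ofReal
  simp only [id, mul_one] at h
  exact h.congr_deriv (by simp only [sinCosComb]; ring)

theorem sinCosComb_neg_mul_mul (c₂ c₃ ω : ℂ) (y : ℝ) :
    sinCosComb (-ω * (ω * c₂)) (ω * (-ω * c₃)) ω y = -ω ^ 2 * sinCosComb c₂ c₃ ω y := by
  simp only [sinCosComb]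
  ring

theorem hasDerivAt_const_mul_cexp (a p : ℂ) (x : ℝ) :
    HasDerivAt (fun x : ℝ => a * cexp (p * x)) (a * p * cexp (p * x)) x := by
  have h := (((hasDerivAt_id (x : ℂ)).const_mul p).cexp.const_mul a).comp_ofReal
  simp only [id, mul_one] at h
  convert h using 1
  ring

theorem deriv_const_mul_cexp (a p : ℂ) :
    deriv (fun x : ℝ => a * cexp (p * x)) = fun x : ℝ => a * p * cexp (p * x) :=
  funext fun x => (hasDerivAt_const_mul_cexp a p x).deriv

theorem deriv_const_mul_cexp_add (a b p q : ℂ) :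
    deriv (fun x : ℝ => a * cexp (p * x) + b * cexp (q * x)) =
      fun x : ℝ => a * p * cexp (p * x) + b * q * cexp (q * x) :=
  funext fun x =>
    ((hasDerivAt_const_mul_cexp a p x).add (hasDerivAt_const_mul_cexp b q x)).deriv

theorem satisfiesStructureEquations_of_modes {μ lam : ℝ} (hμν : μ * (lam - μ) = -1)
    {A A' : ℝ → ℂ} (hA : ∀ y, HasDerivAt A (A' y) y)
    (hA' : ∀ y, HasDerivAt A' (-((μ : ℂ) ^ 2 + 1) * A y) y) (B : ℂ) {f : ℝ → ℝ → ℂ}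
    (hf : ∀ x y, f x y = A y * cexp (I * μ * x) + B * cexp (I * (lam - μ) * x)) :
    SatisfiesStructureEquations μ lam f := by
  obtain rfl : f = fun (x : ℝ) y => A y * cexp (I * μ * x) + B * cexp (I * (lam - μ) * x) :=
    funext₂ hf
  have hμc : (μ : ℂ) * (lam - μ) = -1 := mod_cast hμν
  have deriv_y : ∀ c d : ℂ, deriv (fun y => A y * c + d) = fun y => A' y * c :=
    fun c d => funext fun y => (((hA y).mul_const c).add_const d).deriv
  intro x y
  refine ⟨?_, ?_, ?_⟩
  · simp only [deriv_const_mul_cexp_add]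
    linear_combination (A y * cexp (I * μ * x) + B * cexp (I * (lam - μ) * x)) *
      (hμc - μ * (lam - μ) * I_sq)
  · simp only [deriv_y, deriv_const_mul_cexp]
    ring
  · simp only [deriv_y, deriv_const_mul_cexp_add]
    rw [((hA' y).mul_const _).deriv]
    linear_combination B * cexp (I * (lam - μ) * x) * (hμc - μ * (lam - μ) * I_sq) -
      μ ^ 2 * A y * cexp (I * μ * x) * I_sq

theorem stmt_9 (μ : ℝ) (hμ : μ ≠ 0) (lam : ℝ) (hlam : lam = (μ ^ 2 - 1) / μ)
    (c₁ c₂ c₃ : ℂ) (f : ℝ → ℝ → ℂ)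
    (hf : ∀ x y, f x y =
      (c₂ * (Real.sin (Real.sqrt (μ ^ 2 + 1) * y) : ℝ) +
        c₃ * (Real.cos (Real.sqrt (μ ^ 2 + 1) * y) : ℝ)) * Complex.exp (Complex.I * μ * x) +
      c₁ * (Complex.I * μ / ((μ : ℂ) ^ 2 + 1)) * Complex.exp (Complex.I * (lam - μ) * x)) :
    ∀ x y : ℝ,
      deriv (fun x' => deriv (fun x'' => f x'' y) x') x =
        Complex.I * (lam : ℂ) * deriv (fun x'' => f x'' y) x - f x y ∧
      deriv (fun x' => deriv (fun y' => f x' y') y) x =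
        Complex.I * (μ : ℂ) * deriv (fun y' => f x y') y ∧
      deriv (fun y' => deriv (fun y'' => f x y'') y') y =
        Complex.I * (μ : ℂ) * deriv (fun x'' => f x'' y) x - f x y := by
  let ω : ℂ := (Real.sqrt (μ ^ 2 + 1) : ℂ)
  have hω : ω ^ 2 = (μ : ℂ) ^ 2 + 1 := by
    rw [← ofReal_pow, Real.sq_sqrt (by positivity)]
    push_cast
    ring
  have hμν : μ * (lam - μ) = -1 := by
    rw [hlam]
    field_simp
    ring
  refine satisfiesStructureEquations_of_modes hμν (hasDerivAt_sinCosComb c₂ c₃ ω) (fun y => ?_)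
    (c₁ * (I * μ / ((μ : ℂ) ^ 2 + 1))) (fun x y => ?_)
  · rw [← hω, ← sinCosComb_neg_mul_mul]
    exact hasDerivAt_sinCosComb _ _ ω y
  · rw [hf, sinCosComb]
    push_cast
    rfl
end
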